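/- Let X, Y be real Banach spaces, U ⊆ X open, f : U → Y continuous, and Jf a pseudo-Jacobian mapping for f on U which is upper semicontinuous at a point x ∈ U. Assume that every operator T in the convex hull co Jf(x) is an isomorphism from X onto Y, and that β := inf{//T// : T ∈ co Jf(x)} > 0, where //T// denotes the co-norm of T. Then Jf is regular at x and the regularity index satisfies α_{Jf}(x) = β. -/

import Mathlib

open Filter Topology Metric Set Bornology

noncomputable section

/-- Upper right-hand Dini directional derivative of `φ` at `x` in direction `v`. -/
def diniUpper {X : Type*} [NormedAddCommGroup X] [NormedSpace ℝ X]
    (φ : X → ℝ) (x v : X) : ℝ :=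
  Filter.limsup (fun t : ℝ => (φ (x + t • v) - φ x) / t) (𝓝[>] (0 : ℝ))

/-- `J` is a pseudo-Jacobian of `f` at `x`: `J` is a nonempty set of bounded linear
operators such that for every continuous linear functional `p` on `Y` and every
direction `v`, the upper Dini derivative of `p ∘ f` at `x` in direction `v` is bounded
by `sup {p (T v) : T ∈ J}`. -/
def IsPseudoJacobianAt {X Y : Type*} [NormedAddCommGroup X] [NormedSpace ℝ X]
    [NormedAddCommGroup Y] [NormedSpace ℝ Y]
    (f : X → Y) (J : Set (X →L[ℝ] Y)) (x : X) : Prop :=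
  J.Nonempty ∧ ∀ (p : Y →L[ℝ] ℝ) (v : X),
    diniUpper (fun z => p (f z)) x v ≤ sSup ((fun T : X →L[ℝ] Y => p (T v)) '' J)


/-- The co-norm of a bounded linear operator: `//T// = inf {‖T x‖ : ‖x‖ = 1}`. -/
def conorm {X Y : Type*} [NormedAddCommGroup X] [NormedSpace ℝ X]
    [NormedAddCommGroup Y] [NormedSpace ℝ Y] (T : X →L[ℝ] Y) : ℝ :=
  sInf {c : ℝ | ∃ x : X, ‖x‖ = 1 ∧ c = ‖T x‖}

/-- `T` is an isomorphism of Banach spaces, i.e. a bijective bounded linear operator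
with bounded inverse. -/
def IsBanachIso {X Y : Type*} [NormedAddCommGroup X] [NormedSpace ℝ X]
    [NormedAddCommGroup Y] [NormedSpace ℝ Y] (T : X →L[ℝ] Y) : Prop :=
  ∃ e : X ≃L[ℝ] Y, (e : X →L[ℝ] Y) = T

/-- `Jf(B(x, r)) = ⋃_{z ∈ B(x,r)} Jf z`. -/
def pjBall {X Y : Type*} [NormedAddCommGroup X] [NormedSpace ℝ X]
    [NormedAddCommGroup Y] [NormedSpace ℝ Y]
    (Jf : X → Set (X →L[ℝ] Y)) (x : X) (r : ℝ) : Set (X →L[ℝ] Y) :=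
  ⋃ z ∈ Metric.ball x r, Jf z

/-- The regularity index of `Jf` at `x`:
`α_{Jf}(x) = sup_{r > 0} inf {//T// : T ∈ co Jf(B(x,r))}`. -/
def regIndex {X Y : Type*} [NormedAddCommGroup X] [NormedSpace ℝ X]
    [NormedAddCommGroup Y] [NormedSpace ℝ Y]
    (Jf : X → Set (X →L[ℝ] Y)) (x : X) : ℝ :=
  sSup {c : ℝ | ∃ r > 0, c = sInf (conorm '' convexHull ℝ (pjBall Jf x r))}

/-- `Jf` is regular at `x`: for some `r > 0` every operator in `co Jf(B(x,r))` is an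
isomorphism, and the regularity index at `x` is positive. -/
def IsRegularAt {X Y : Type*} [NormedAddCommGroup X] [NormedSpace ℝ X]
    [NormedAddCommGroup Y] [NormedSpace ℝ Y]
    (Jf : X → Set (X →L[ℝ] Y)) (x : X) : Prop :=
  (∃ r > 0, ∀ T ∈ convexHull ℝ (pjBall Jf x r), IsBanachIso T) ∧ 0 < regIndex Jf x

/-! Upper semicontinuity puts `co Jf(B(x, δ))` inside the `ε`-thickening of `co Jf(x)`, because
the thickening of a convex set is convex. The co-norm is `1`-Lipschitz for the operator norm, so it
drops by at most `ε` on that thickening, which gives `α_{Jf}(x) = β`. For `ε ≤ β`, every operator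
there is an isomorphism `T₀` perturbed by less than `//T₀// ≤ ‖T₀⁻¹‖⁻¹`, hence is invertible by a
Neumann series. -/

section Conorm

variable {X Y : Type*} [NormedAddCommGroup X] [NormedSpace ℝ X]
  [NormedAddCommGroup Y] [NormedSpace ℝ Y]

lemma conorm_nonneg (T : X →L[ℝ] Y) : 0 ≤ conorm T :=
  Real.sInf_nonneg <| by rintro _ ⟨u, -, rfl⟩; exact norm_nonneg _

lemma conorm_of_subsingleton [Subsingleton X] (T : X →L[ℝ] Y) : conorm T = 0 := by
  have hempty : {c : ℝ | ∃ u : X, ‖u‖ = 1 ∧ c = ‖T u‖} = ∅ :=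
    eq_empty_iff_forall_notMem.2 fun _ ⟨u, hu, _⟩ => by simp [Subsingleton.elim u 0] at hu
  rw [conorm, hempty, Real.sInf_empty]

lemma conorm_le_norm_apply {T : X →L[ℝ] Y} {u : X} (hu : ‖u‖ = 1) : conorm T ≤ ‖T u‖ :=
  csInf_le ⟨0, by rintro _ ⟨v, -, rfl⟩; exact norm_nonneg _⟩ ⟨u, hu, rfl⟩

lemma conorm_mul_norm_le (T : X →L[ℝ] Y) (v : X) : conorm T * ‖v‖ ≤ ‖T v‖ := by
  rcases eq_or_ne v 0 with rfl | hv
  · simp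
  have hv' : 0 < ‖v‖ := norm_pos_iff.2 hv
  have hunit : ‖‖v‖⁻¹ • v‖ = 1 := by rw [norm_smul, norm_inv, norm_norm, inv_mul_cancel₀ hv'.ne']
  have h := conorm_le_norm_apply (T := T) hunit
  rw [map_smul, norm_smul, norm_inv, norm_norm, ← div_eq_inv_mul, le_div_iff₀ hv'] at h
  exact h

lemma le_conorm [Nontrivial X] {T : X →L[ℝ] Y} {c : ℝ} (h : ∀ u : X, ‖u‖ = 1 → c ≤ ‖T u‖) :
    c ≤ conorm T := by
  obtain ⟨u₀, hu₀⟩ := exists_norm_eq X zero_le_one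
  refine le_csInf ⟨_, u₀, hu₀, rfl⟩ ?_
  rintro _ ⟨u, hu, rfl⟩
  exact h u hu

lemma conorm_le_conorm_add_norm_sub [Nontrivial X] (T T₀ : X →L[ℝ] Y) :
    conorm T₀ ≤ conorm T + ‖T - T₀‖ := by
  rw [← sub_le_iff_le_add]
  refine le_conorm fun u hu => ?_
  calc conorm T₀ - ‖T - T₀‖ ≤ ‖T₀ u‖ - ‖(T - T₀) u‖ := by
        gcongr
        · exact conorm_le_norm_apply hu
        · simpa [hu] using (T - T₀).le_opNorm u
    _ ≤ ‖T u‖ := by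
        rw [sub_le_iff_le_add, sub_apply, norm_sub_rev]
        exact norm_le_norm_add_norm_sub' (T₀ u) (T u)

lemma ContinuousLinearEquiv.norm_symm_le_inv_conorm (e : X ≃L[ℝ] Y)
    (he : 0 < conorm (e : X →L[ℝ] Y)) : ‖(e.symm : Y →L[ℝ] X)‖ ≤ (conorm (e : X →L[ℝ] Y))⁻¹ := by
  refine ContinuousLinearMap.opNorm_le_bound _ (inv_nonneg.2 he.le) fun y => ?_
  rw [inv_mul_eq_div, le_div_iff₀ he, mul_comm]
  simpa using conorm_mul_norm_le (e : X →L[ℝ] Y) (e.symm y)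

lemma IsBanachIso.of_norm_sub_lt_conorm [CompleteSpace X] {T T₀ : X →L[ℝ] Y}
    (hT₀ : IsBanachIso T₀) (hT : ‖T - T₀‖ < conorm T₀) : IsBanachIso T := by
  obtain ⟨e, he⟩ := hT₀
  have hpos : 0 < conorm T₀ := (norm_nonneg _).trans_lt hT
  set S : X →L[ℝ] X := (e.symm : Y →L[ℝ] X).comp (T - T₀)
  have hS : ‖-S‖ < 1 := by
    calc ‖-S‖ ≤ ‖(e.symm : Y →L[ℝ] X)‖ * ‖T - T₀‖ := by
          rw [norm_neg]; exact ContinuousLinearMap.opNorm_comp_le _ _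
      _ < (conorm T₀)⁻¹ * conorm T₀ :=
          mul_lt_mul' (he ▸ e.norm_symm_le_inv_conorm (he ▸ hpos)) hT (norm_nonneg _)
            (inv_pos.2 hpos)
      _ = 1 := inv_mul_cancel₀ hpos.ne'
  refine ⟨(ContinuousLinearEquiv.unitsEquiv ℝ X (Units.oneSub _ hS)).trans e, ?_⟩
  ext v
  have hv : e v = T₀ v := congrArg (· v) he
  simp [S, Units.oneSub, hv]

lemma bddBelow_conorm_image (s : Set (X →L[ℝ] Y)) : BddBelow (conorm '' s) :=
  ⟨0, by rintro _ ⟨T, -, rfl⟩; exact conorm_nonneg T⟩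

lemma nonempty_of_sInf_conorm_image_pos {s : Set (X →L[ℝ] Y)} (h : 0 < sInf (conorm '' s)) :
    s.Nonempty := by
  by_contra hs
  simp [not_nonempty_iff_eq_empty.1 hs] at h

lemma nontrivial_of_sInf_conorm_image_pos {s : Set (X →L[ℝ] Y)} (h : 0 < sInf (conorm '' s)) :
    Nontrivial X := by
  by_contra hX
  rw [not_nontrivial_iff_subsingleton] at hX
  exact h.not_ge <| Real.sInf_nonpos <| by rintro _ ⟨T, -, rfl⟩; exact (conorm_of_subsingleton T).le

end Conorm

lemma convexHull_subset_thickening_convexHull {E : Type*} [NormedAddCommGroup E] [NormedSpace ℝ E]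
    {A B : Set E} {ε : ℝ} (h : A ⊆ thickening ε B) :
    convexHull ℝ A ⊆ thickening ε (convexHull ℝ B) :=
  convexHull_min (h.trans (thickening_subset_of_subset ε (subset_convexHull ℝ B)))
    ((convex_convexHull ℝ B).thickening ε)

section PseudoJacobianBall

variable {X Y : Type*} [NormedAddCommGroup X] [NormedSpace ℝ X]
  [NormedAddCommGroup Y] [NormedSpace ℝ Y] {Jf : X → Set (X →L[ℝ] Y)} {x : X}

lemma subset_pjBall {r : ℝ} (hr : 0 < r) : Jf x ⊆ pjBall Jf x r :=
  fun _ hT => mem_biUnion (mem_ball_self hr) hT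

lemma convexHull_pjBall_subset_thickening {δ ε : ℝ}
    (h : ∀ z ∈ ball x δ, ∀ T ∈ Jf z, ∃ T₀ ∈ Jf x, ‖T - T₀‖ < ε) :
    convexHull ℝ (pjBall Jf x δ) ⊆ thickening ε (convexHull ℝ (Jf x)) := by
  refine convexHull_subset_thickening_convexHull fun T hT => ?_
  simp only [pjBall, mem_iUnion, exists_prop] at hT
  obtain ⟨z, hz, hTz⟩ := hT
  obtain ⟨T₀, hT₀, hd⟩ := h z hz T hTz
  exact mem_thickening_iff.2 ⟨T₀, hT₀, by rwa [dist_eq_norm]⟩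

lemma sInf_conorm_convexHull_pjBall_le (hne : (Jf x).Nonempty) {r : ℝ} (hr : 0 < r) :
    sInf (conorm '' convexHull ℝ (pjBall Jf x r)) ≤ sInf (conorm '' convexHull ℝ (Jf x)) :=
  csInf_le_csInf (bddBelow_conorm_image _) ((hne.convexHull).image conorm)
    (image_mono (convexHull_mono (subset_pjBall hr)))

lemma regIndex_eq_sInf_conorm (hne : (Jf x).Nonempty)
    (h : ∀ ε > 0, ∃ δ > 0, ∀ T ∈ convexHull ℝ (pjBall Jf x δ),
      sInf (conorm '' convexHull ℝ (Jf x)) - ε ≤ conorm T) :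
    regIndex Jf x = sInf (conorm '' convexHull ℝ (Jf x)) := by
  refine csSup_eq_of_forall_le_of_forall_lt_exists_gt ⟨_, 1, one_pos, rfl⟩ ?_ fun w hw => ?_
  · rintro _ ⟨r, hr, rfl⟩
    exact sInf_conorm_convexHull_pjBall_le hne hr
  · obtain ⟨δ, hδ, hδT⟩ := h _ (half_pos (sub_pos.2 hw))
    have hne' : (conorm '' convexHull ℝ (pjBall Jf x δ)).Nonempty :=
      ((hne.mono (subset_pjBall hδ)).convexHull).image conorm
    refine ⟨_, ⟨δ, hδ, rfl⟩, ?_⟩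
    refine lt_of_lt_of_le ?_ (le_csInf hne' (by rintro _ ⟨T, hT, rfl⟩; exact hδT T hT))
    linarith

end PseudoJacobianBall

theorem regular_of_usc_general
    {X Y : Type*} [NormedAddCommGroup X] [NormedSpace ℝ X] [CompleteSpace X]
    [NormedAddCommGroup Y] [NormedSpace ℝ Y]
    {U : Set X}
    {Jf : X → Set (X →L[ℝ] Y)}
    {x : X}
    (husc : ∀ ε > 0, ∃ δ > 0, Metric.ball x δ ⊆ U ∧
      ∀ z ∈ Metric.ball x δ, ∀ T ∈ Jf z, ∃ T₀ ∈ Jf x, ‖T - T₀‖ < ε)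
    (hiso : ∀ T ∈ convexHull ℝ (Jf x), IsBanachIso T)
    (hβ : 0 < sInf (conorm '' convexHull ℝ (Jf x))) :
    IsRegularAt Jf x ∧ regIndex Jf x = sInf (conorm '' convexHull ℝ (Jf x)) := by
  set β := sInf (conorm '' convexHull ℝ (Jf x))
  have hne : (Jf x).Nonempty := convexHull_nonempty_iff.1 (nonempty_of_sInf_conorm_image_pos hβ)
  have := nontrivial_of_sInf_conorm_image_pos hβ
  have hβ_le : ∀ T₀ ∈ convexHull ℝ (Jf x), β ≤ conorm T₀ :=
    fun T₀ hT₀ => csInf_le (bddBelow_conorm_image _) ⟨T₀, hT₀, rfl⟩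
  have hnear : ∀ ε > 0, ∃ δ > 0, ∀ T ∈ convexHull ℝ (pjBall Jf x δ),
      ∃ T₀ ∈ convexHull ℝ (Jf x), ‖T - T₀‖ < ε := fun ε hε => by
    obtain ⟨δ, hδ, -, hδJ⟩ := husc ε hε
    refine ⟨δ, hδ, fun T hT => ?_⟩
    obtain ⟨T₀, hT₀, hd⟩ := mem_thickening_iff.1 (convexHull_pjBall_subset_thickening hδJ hT)
    exact ⟨T₀, hT₀, by rwa [← dist_eq_norm]⟩
  have hreg : regIndex Jf x = β := regIndex_eq_sInf_conorm hne fun ε hε => by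
    obtain ⟨δ, hδ, hδT⟩ := hnear ε hε
    refine ⟨δ, hδ, fun T hT => ?_⟩
    obtain ⟨T₀, hT₀, hd⟩ := hδT T hT
    linarith [hβ_le T₀ hT₀, conorm_le_conorm_add_norm_sub T T₀]
  obtain ⟨δ, hδ, hδT⟩ := hnear β hβ
  refine ⟨⟨⟨δ, hδ, fun T hT => ?_⟩, hreg ▸ hβ⟩, hreg⟩
  obtain ⟨T₀, hT₀, hd⟩ := hδT T hT
  exact (hiso T₀ hT₀).of_norm_sub_lt_conorm (hd.trans_le (hβ_le T₀ hT₀))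

/-- If `Jf` is upper semicontinuous at `x`, every operator in `co Jf(x)` is an
isomorphism, and `inf {//T// : T ∈ co Jf(x)} > 0`, then `Jf` is regular at `x` and
`α_{Jf}(x) = inf {//T// : T ∈ co Jf(x)}`. -/
theorem regular_of_usc
    {X Y : Type*} [NormedAddCommGroup X] [NormedSpace ℝ X] [CompleteSpace X]
    [NormedAddCommGroup Y] [NormedSpace ℝ Y] [CompleteSpace Y]
    {U : Set X} (hUopen : IsOpen U)
    {f : X → Y} (hf : ContinuousOn f U)
    {Jf : X → Set (X →L[ℝ] Y)} (hJf : ∀ z ∈ U, IsPseudoJacobianAt f (Jf z) z)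
    {x : X} (hx : x ∈ U)
    (husc : ∀ ε > 0, ∃ δ > 0, Metric.ball x δ ⊆ U ∧
      ∀ z ∈ Metric.ball x δ, ∀ T ∈ Jf z, ∃ T₀ ∈ Jf x, ‖T - T₀‖ < ε)
    (hiso : ∀ T ∈ convexHull ℝ (Jf x), IsBanachIso T)
    (hβ : 0 < sInf (conorm '' convexHull ℝ (Jf x))) :
    IsRegularAt Jf x ∧ regIndex Jf x = sInf (conorm '' convexHull ℝ (Jf x)) :=
  regular_of_usc_general husc hiso hβ

end
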